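/- arXiv:2501.18337 — 3 statements merged into one kernel-verified Lean document; each statement's English description precedes it below -/
import Mathlib

section
/- Let μ be a probability measure on {0,1}×{0,1}×{0,1} with coordinate random variables X, Y, Z, and suppose μ has full support, i.e. μ(X=i, Y=j, Z=k) > 0 for all i,j,k ∈ {0,1}. If X⊥Z, X⊥Y|Z and Y⊥Z|X all hold, then X, Y, Z are mutually independent. -/
open MeasureTheory

/-- The sample space `{0,1} × {0,1} × {0,1}`. -/
abbrev Omega3 : Type := Fin 2 × Fin 2 × Fin 2

noncomputable section

/-- marginal `μ(X = i)` -/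
def pX (μ : Measure Omega3) (i : Fin 2) : ENNReal := μ {ω | ω.1 = i}
/-- marginal `μ(Y = j)` -/
def pY (μ : Measure Omega3) (j : Fin 2) : ENNReal := μ {ω | ω.2.1 = j}
/-- marginal `μ(Z = k)` -/
def pZ (μ : Measure Omega3) (k : Fin 2) : ENNReal := μ {ω | ω.2.2 = k}
/-- `μ(X = i, Y = j)` -/
def pXY (μ : Measure Omega3) (i j : Fin 2) : ENNReal := μ {ω | ω.1 = i ∧ ω.2.1 = j}
/-- `μ(X = i, Z = k)` -/
def pXZ (μ : Measure Omega3) (i k : Fin 2) : ENNReal := μ {ω | ω.1 = i ∧ ω.2.2 = k}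
/-- `μ(Y = j, Z = k)` -/
def pYZ (μ : Measure Omega3) (j k : Fin 2) : ENNReal := μ {ω | ω.2.1 = j ∧ ω.2.2 = k}
/-- `μ(X = i, Y = j, Z = k)` -/
def pXYZ (μ : Measure Omega3) (i j k : Fin 2) : ENNReal :=
  μ {ω | ω.1 = i ∧ ω.2.1 = j ∧ ω.2.2 = k}

/-- `X ⊥ Y` -/
def IndXY (μ : Measure Omega3) : Prop := ∀ i j, pXY μ i j = pX μ i * pY μ j
/-- `X ⊥ Z` -/
def IndXZ (μ : Measure Omega3) : Prop := ∀ i k, pXZ μ i k = pX μ i * pZ μ k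
/-- `Y ⊥ Z` -/
def IndYZ (μ : Measure Omega3) : Prop := ∀ j k, pYZ μ j k = pY μ j * pZ μ k
/-- `X ⊥ Y | Z` -/
def CondXY_Z (μ : Measure Omega3) : Prop :=
  ∀ i j k, pXYZ μ i j k * pZ μ k = pXZ μ i k * pYZ μ j k
/-- `X ⊥ Z | Y` -/
def CondXZ_Y (μ : Measure Omega3) : Prop :=
  ∀ i j k, pXYZ μ i j k * pY μ j = pXY μ i j * pYZ μ j k
/-- `Y ⊥ Z | X` -/
def CondYZ_X (μ : Measure Omega3) : Prop :=
  ∀ i j k, pXYZ μ i j k * pX μ i = pXY μ i j * pXZ μ i k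
/-- `X ⊥ Y ⊥ Z` (mutual independence) -/
def MutualIndep (μ : Measure Omega3) : Prop :=
  ∀ i j k, pXYZ μ i j k = pX μ i * pY μ j * pZ μ k
/-- `X ⊥ (Y, Z)` (joint independence of `X` from the pair) -/
def JointX_YZ (μ : Measure Omega3) : Prop :=
  ∀ i j k, pXYZ μ i j k = pX μ i * pYZ μ j k
/-- `Y ⊥ (X, Z)` -/
def JointY_XZ (μ : Measure Omega3) : Prop :=
  ∀ i j k, pXYZ μ i j k = pY μ j * pXZ μ i k
/-- `Z ⊥ (X, Y)` -/
def JointZ_XY (μ : Measure Omega3) : Prop :=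
  ∀ i j k, pXYZ μ i j k = pZ μ k * pXY μ i j
/-- `μ` has full support on the eight atoms. -/
def FullSupport (μ : Measure Omega3) : Prop := ∀ i j k, 0 < pXYZ μ i j k

/-! Since `X ⊥ Z`, the hypothesis `X ⊥ Y | Z` reads `μ(X=i,Y=j,Z=k) = μ(X=i) μ(Y=j,Z=k)`, i.e.
`X ⊥ (Y,Z)`. Substituting this and `X ⊥ Z` into `Y ⊥ Z | X` and cancelling `μ(X=i) > 0` gives
`μ(X=i,Y=j) μ(Z=k) = μ(X=i) μ(Y=j,Z=k)`; summing over `i` yields `Y ⊥ Z`, and together with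
`X ⊥ (Y,Z)` this is mutual independence. -/

lemma measure_fst_eq_zero_inter_add_fst_eq_one_inter {α : Type*} [MeasurableSpace α]
    (μ : Measure (Fin 2 × α)) (s : Set (Fin 2 × α)) :
    μ ({ω | ω.1 = 0} ∩ s) + μ ({ω | ω.1 = 1} ∩ s) = μ s := by
  have hsdiff : s \ {ω | ω.1 = 0} = {ω | ω.1 = 1} ∩ s := by
    ext ω
    simp only [Set.mem_sdiff, Set.mem_inter_iff, Set.mem_ofPred_eq, and_comm]
    exact and_congr_right fun _ => by omega
  rw [← hsdiff, Set.inter_comm]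
  exact measure_inter_add_sdiff s (measurable_fst (measurableSet_singleton 0))

section Omega3

variable (μ : Measure Omega3)

lemma pX_zero_add_pX_one [IsProbabilityMeasure μ] : pX μ 0 + pX μ 1 = 1 := by
  simpa only [pX, Set.inter_univ, measure_univ] using
    measure_fst_eq_zero_inter_add_fst_eq_one_inter μ Set.univ

lemma pXY_zero_add_pXY_one (j : Fin 2) : pXY μ 0 j + pXY μ 1 j = pY μ j :=
  measure_fst_eq_zero_inter_add_fst_eq_one_inter μ {ω | ω.2.1 = j}

variable {μ}

lemma FullSupport.pX_ne_zero (hfs : FullSupport μ) (i : Fin 2) : pX μ i ≠ 0 :=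
  ((hfs i 0 0).trans_le (measure_mono fun _ hω => hω.1)).ne'

lemma FullSupport.pZ_ne_zero (hfs : FullSupport μ) (k : Fin 2) : pZ μ k ≠ 0 :=
  ((hfs 0 0 k).trans_le (measure_mono fun _ hω => hω.2.2)).ne'

lemma jointX_YZ_of_indXZ_of_condXY_Z [IsFiniteMeasure μ] (hZ : ∀ k, pZ μ k ≠ 0)
    (hXZ : IndXZ μ) (hXY_Z : CondXY_Z μ) : JointX_YZ μ := by
  intro i j k
  refine (ENNReal.mul_left_inj (hZ k) (measure_ne_top μ _)).mp ?_
  rw [hXY_Z, hXZ, mul_right_comm]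

lemma pXY_mul_pZ_eq_pX_mul_pYZ [IsFiniteMeasure μ] (hX : ∀ i, pX μ i ≠ 0)
    (hXZ : IndXZ μ) (hX_YZ : JointX_YZ μ) (hYZ_X : CondYZ_X μ) (i j k : Fin 2) :
    pXY μ i j * pZ μ k = pX μ i * pYZ μ j k := by
  refine (ENNReal.mul_left_inj (hX i) (measure_ne_top μ _)).mp ?_
  calc pXY μ i j * pZ μ k * pX μ i = pXY μ i j * pXZ μ i k := by rw [hXZ]; ring
    _ = pX μ i * pYZ μ j k * pX μ i := by rw [← hYZ_X, hX_YZ]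

lemma indYZ_of_pXY_mul_pZ_eq_pX_mul_pYZ [IsProbabilityMeasure μ]
    (h : ∀ i j k, pXY μ i j * pZ μ k = pX μ i * pYZ μ j k) : IndYZ μ := by
  intro j k
  calc pYZ μ j k = (pX μ 0 + pX μ 1) * pYZ μ j k := by rw [pX_zero_add_pX_one, one_mul]
    _ = (pXY μ 0 j + pXY μ 1 j) * pZ μ k := by rw [add_mul, add_mul, h, h]
    _ = pY μ j * pZ μ k := by rw [pXY_zero_add_pXY_one]

end Omega3

theorem stmt_8 (μ : Measure Omega3) [IsProbabilityMeasure μ]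
    (hfs : FullSupport μ)
    (h1 : IndXZ μ) (h2 : CondXY_Z μ) (h3 : CondYZ_X μ) :
    MutualIndep μ := by
  have hX_YZ : JointX_YZ μ := jointX_YZ_of_indXZ_of_condXY_Z hfs.pZ_ne_zero h1 h2
  have hYZ : IndYZ μ := indYZ_of_pXY_mul_pZ_eq_pX_mul_pYZ
    (pXY_mul_pZ_eq_pX_mul_pYZ hfs.pX_ne_zero h1 hX_YZ h3)
  intro i j k
  rw [hX_YZ, hYZ, mul_assoc]
end
end

section
/- Let μ be a probability measure on {0,1}×{0,1}×{0,1} with coordinate random variables X, Y, Z, and suppose μ has full support, i.e. μ(X=i, Y=j, Z=k) > 0 for all i,j,k ∈ {0,1}. If Y⊥Z, X⊥Y|Z, X⊥Z|Y and Y⊥Z|X all hold, then X, Y, Z are mutually independent; in particular X⊥Y and X⊥Z also hold. -/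
open MeasureTheory

noncomputable section

lemma fin2cases (a : Fin 2) : a = 0 ∨ a = 1 := by
  fin_cases a
  · exact Or.inl rfl
  · exact Or.inr rfl

lemma sum_pY (μ : Measure Omega3) [IsProbabilityMeasure μ] : pY μ 0 + pY μ 1 = 1 := by
  have hd : Disjoint {ω : Omega3 | ω.2.1 = 0} {ω : Omega3 | ω.2.1 = 1} := by
    rw [Set.disjoint_left]; rintro ω h0 h1; simp_all
  have hm : MeasurableSet {ω : Omega3 | ω.2.1 = 1} := by measurability
  have hu : {ω : Omega3 | ω.2.1 = 0} ∪ {ω : Omega3 | ω.2.1 = 1} = Set.univ := by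
    ext ω; simpa using fin2cases ω.2.1
  have := measure_union (μ := μ) hd hm
  rw [hu] at this
  simpa [pY, measure_univ] using this.symm

lemma sum_pZ (μ : Measure Omega3) [IsProbabilityMeasure μ] : pZ μ 0 + pZ μ 1 = 1 := by
  have hd : Disjoint {ω : Omega3 | ω.2.2 = 0} {ω : Omega3 | ω.2.2 = 1} := by
    rw [Set.disjoint_left]; rintro ω h0 h1; simp_all
  have hm : MeasurableSet {ω : Omega3 | ω.2.2 = 1} := by measurability
  have hu : {ω : Omega3 | ω.2.2 = 0} ∪ {ω : Omega3 | ω.2.2 = 1} = Set.univ := by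
    ext ω; simpa using fin2cases ω.2.2
  have := measure_union (μ := μ) hd hm
  rw [hu] at this
  simpa [pZ, measure_univ] using this.symm

lemma sum_pXY (μ : Measure Omega3) (i : Fin 2) : pXY μ i 0 + pXY μ i 1 = pX μ i := by
  have hd : Disjoint {ω : Omega3 | ω.1 = i ∧ ω.2.1 = 0} {ω : Omega3 | ω.1 = i ∧ ω.2.1 = 1} := by
    rw [Set.disjoint_left]; rintro ω h0 h1; simp_all
  have hm : MeasurableSet {ω : Omega3 | ω.1 = i ∧ ω.2.1 = 1} := by measurability
  have hu : {ω : Omega3 | ω.1 = i ∧ ω.2.1 = 0} ∪ {ω : Omega3 | ω.1 = i ∧ ω.2.1 = 1}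
      = {ω : Omega3 | ω.1 = i} := by
    ext ω
    simp only [Set.mem_union, Set.mem_setOf_eq]
    constructor
    · rintro (⟨h, _⟩ | ⟨h, _⟩) <;> exact h
    · intro h; rcases fin2cases ω.2.1 with h' | h'
      · exact Or.inl ⟨h, h'⟩
      · exact Or.inr ⟨h, h'⟩
  have := measure_union (μ := μ) hd hm
  rw [hu] at this
  simpa [pXY, pX] using this.symm

lemma sum_pXZ (μ : Measure Omega3) (i : Fin 2) : pXZ μ i 0 + pXZ μ i 1 = pX μ i := by
  have hd : Disjoint {ω : Omega3 | ω.1 = i ∧ ω.2.2 = 0} {ω : Omega3 | ω.1 = i ∧ ω.2.2 = 1} := by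
    rw [Set.disjoint_left]; rintro ω h0 h1; simp_all
  have hm : MeasurableSet {ω : Omega3 | ω.1 = i ∧ ω.2.2 = 1} := by measurability
  have hu : {ω : Omega3 | ω.1 = i ∧ ω.2.2 = 0} ∪ {ω : Omega3 | ω.1 = i ∧ ω.2.2 = 1}
      = {ω : Omega3 | ω.1 = i} := by
    ext ω
    simp only [Set.mem_union, Set.mem_setOf_eq]
    constructor
    · rintro (⟨h, _⟩ | ⟨h, _⟩) <;> exact h
    · intro h; rcases fin2cases ω.2.2 with h' | h'
      · exact Or.inl ⟨h, h'⟩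
      · exact Or.inr ⟨h, h'⟩
  have := measure_union (μ := μ) hd hm
  rw [hu] at this
  simpa [pXZ, pX] using this.symm

theorem stmt_12 (μ : Measure Omega3) [IsProbabilityMeasure μ]
    (hfs : FullSupport μ)
    (h1 : IndYZ μ) (h2 : CondXY_Z μ) (h3 : CondXZ_Y μ) (h4 : CondYZ_X μ) :
    MutualIndep μ ∧ IndXY μ ∧ IndXZ μ := by
  -- positivity and finiteness facts
  have hYZpos : ∀ j k, pYZ μ j k ≠ 0 := by
    intro j k
    have hsub : {ω : Omega3 | ω.1 = 0 ∧ ω.2.1 = j ∧ ω.2.2 = k} ⊆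
        {ω : Omega3 | ω.2.1 = j ∧ ω.2.2 = k} := fun ω h => ⟨h.2.1, h.2.2⟩
    exact (lt_of_lt_of_le (hfs 0 j k) (measure_mono hsub)).ne'
  have hZpos : ∀ k, pZ μ k ≠ 0 := by
    intro k
    have hsub : {ω : Omega3 | ω.1 = 0 ∧ ω.2.1 = 0 ∧ ω.2.2 = k} ⊆
        {ω : Omega3 | ω.2.2 = k} := fun ω h => h.2.2
    exact (lt_of_lt_of_le (hfs 0 0 k) (measure_mono hsub)).ne'
  have hYZfin : ∀ j k, pYZ μ j k ≠ ⊤ := fun j k => measure_ne_top μ _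
  have hZfin : ∀ k, pZ μ k ≠ ⊤ := fun k => measure_ne_top μ _
  -- key identity: pXZ i k * pY j = pXY i j * pZ k
  have key : ∀ i j k, pXZ μ i k * pY μ j = pXY μ i j * pZ μ k := by
    intro i j k
    have e : pYZ μ j k * (pXZ μ i k * pY μ j) = pYZ μ j k * (pXY μ i j * pZ μ k) := by
      calc pYZ μ j k * (pXZ μ i k * pY μ j)
          = pXZ μ i k * pYZ μ j k * pY μ j := by ring
        _ = pXYZ μ i j k * pZ μ k * pY μ j := by rw [← h2 i j k]
        _ = pXYZ μ i j k * pY μ j * pZ μ k := by ring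
        _ = pXY μ i j * pYZ μ j k * pZ μ k := by rw [h3 i j k]
        _ = pYZ μ j k * (pXY μ i j * pZ μ k) := by ring
    exact (ENNReal.mul_right_inj (hYZpos j k) (hYZfin j k)).mp e
  have hIndXZ : IndXZ μ := by
    intro i k
    have e0 := key i 0 k
    have e1 := key i 1 k
    have : pXZ μ i k * (pY μ 0 + pY μ 1) = (pXY μ i 0 + pXY μ i 1) * pZ μ k := by
      rw [mul_add, add_mul, e0, e1]
    rwa [sum_pY, sum_pXY, mul_one] at this
  have hIndXY : IndXY μ := by
    intro i j
    have e0 := key i j 0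
    have e1 := key i j 1
    have : (pXZ μ i 0 + pXZ μ i 1) * pY μ j = pXY μ i j * (pZ μ 0 + pZ μ 1) := by
      rw [mul_add, add_mul, e0, e1]
    rw [sum_pZ, sum_pXZ, mul_one] at this
    exact this.symm
  have hMut : MutualIndep μ := by
    intro i j k
    have e : pZ μ k * pXYZ μ i j k = pZ μ k * (pX μ i * pY μ j * pZ μ k) := by
      calc pZ μ k * pXYZ μ i j k = pXYZ μ i j k * pZ μ k := by ring
        _ = pXZ μ i k * pYZ μ j k := h2 i j k
        _ = (pX μ i * pZ μ k) * (pY μ j * pZ μ k) := by rw [hIndXZ i k, h1 j k]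
        _ = pZ μ k * (pX μ i * pY μ j * pZ μ k) := by ring
    exact (ENNReal.mul_right_inj (hZpos k) (hZfin k)).mp e
  exact ⟨hMut, hIndXY, hIndXZ⟩
end
end

section
/- Let μ be a probability measure on {0,1}×{0,1}×{0,1} with coordinate random variables X, Y, Z. If all six relations X⊥Y, X⊥Z, Y⊥Z, X⊥Y|Z, X⊥Z|Y and Y⊥Z|X hold, then X, Y, Z are mutually independent. -/
open MeasureTheory

noncomputable section

/-! `X ⊥ Y | Z` together with `X ⊥ Z` and `Y ⊥ Z` gives
`μ(x,y,z) μ(z) = μ(x) μ(y) μ(z) · μ(z)`. Cancel `μ(z)` when it is nonzero; when it vanishes,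
so does `μ(x,y,z) ≤ μ(z)`. -/

lemma pXYZ_le_pZ (μ : Measure Omega3) (i j k : Fin 2) : pXYZ μ i j k ≤ pZ μ k :=
  measure_mono fun _ hω => hω.2.2

lemma pXYZ_mul_pZ_of_condXY_Z {μ : Measure Omega3} (hXZ : IndXZ μ) (hYZ : IndYZ μ)
    (hXY_Z : CondXY_Z μ) (i j k : Fin 2) :
    pXYZ μ i j k * pZ μ k = pX μ i * pY μ j * pZ μ k * pZ μ k := by
  rw [hXY_Z, hXZ, hYZ]
  ring

theorem stmt_13_general (μ : Measure Omega3) [IsProbabilityMeasure μ]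
    (h2 : IndXZ μ) (h3 : IndYZ μ)
    (h4 : CondXY_Z μ) :
    MutualIndep μ := by
  intro i j k
  by_cases hz : pZ μ k = 0
  · have hxyz : pXYZ μ i j k = 0 := nonpos_iff_eq_zero.mp (hz ▸ pXYZ_le_pZ μ i j k)
    rw [hxyz, hz, mul_zero]
  · exact (ENNReal.mul_left_inj hz (measure_ne_top μ _)).mp
      (pXYZ_mul_pZ_of_condXY_Z h2 h3 h4 i j k)

theorem stmt_13 (μ : Measure Omega3) [IsProbabilityMeasure μ]
    (h1 : IndXY μ) (h2 : IndXZ μ) (h3 : IndYZ μ)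
    (h4 : CondXY_Z μ) (h5 : CondXZ_Y μ) (h6 : CondYZ_X μ) :
    MutualIndep μ :=
  stmt_13_general μ h2 h3 h4
end
end
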